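/- arXiv:0807.1825 — 4 statements merged into one kernel-verified Lean document; each statement's English description precedes it below -/
import Mathlib

section
/- Let 0 < α < 2. For each fixed t ∈ (0,1), the function p ↦ (t^p − 1)(1 − t^{α−p−1}) / (1 − t)^{1+α}, defined for p ∈ (−1, α), is convex and is symmetric with respect to the point p = (α−1)/2, i.e. it takes equal values at p and at α − 1 − p. -/
open MeasureTheory Real Set

/-! Since `t ^ p * t ^ (α - 1 - p) = t ^ (α - 1)`, the numerator expands to
`t ^ p + t ^ (α - 1 - p) - (t ^ (α - 1) + 1)`: a sum of two exponentials in `p`, hence convex, and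
visibly invariant under `p ↦ α - 1 - p`. The denominator is a nonnegative constant. -/

namespace Real

theorem convexOn_rpow_sub_left {b : ℝ} (hb : 0 < b) (c : ℝ) :
    ConvexOn ℝ univ fun x : ℝ => b ^ (c - x) := by
  refine ((convexOn_rpow_left (inv_pos.2 hb)).smul (rpow_nonneg hb.le c)).congr fun x _ => ?_
  simp only [smul_eq_mul, inv_rpow hb.le, ← rpow_neg hb.le, ← rpow_add hb, sub_eq_add_neg]

theorem rpow_sub_one_mul_one_sub_rpow_sub {b : ℝ} (hb : 0 < b) (c x : ℝ) :
    (b ^ x - 1) * (1 - b ^ (c - x)) = b ^ x + b ^ (c - x) - (b ^ c + 1) := by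
  have hprod : b ^ x * b ^ (c - x) = b ^ c := by rw [← rpow_add hb, add_sub_cancel]
  linear_combination -hprod

theorem convexOn_rpow_sub_one_mul_one_sub_rpow_sub {b : ℝ} (hb : 0 < b) (c : ℝ) :
    ConvexOn ℝ univ fun x : ℝ => (b ^ x - 1) * (1 - b ^ (c - x)) := by
  refine (((convexOn_rpow_left hb).add (convexOn_rpow_sub_left hb c)).add_const
    (-(b ^ c + 1))).congr fun x _ => ?_
  rw [rpow_sub_one_mul_one_sub_rpow_sub hb, sub_eq_add_neg]
  rfl

end Real

theorem gamma_integrand_convex_symmetric_general (α : ℝ)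
    (t : ℝ) (ht0 : 0 < t) (ht1 : t < 1) :
    ConvexOn ℝ (Set.Ioo (-1 : ℝ) α)
        (fun p : ℝ => (t ^ p - 1) * (1 - t ^ (α - p - 1)) / (1 - t) ^ (1 + α)) ∧
      ∀ p ∈ Set.Ioo (-1 : ℝ) α,
        (t ^ p - 1) * (1 - t ^ (α - p - 1)) / (1 - t) ^ (1 + α) =
          (t ^ (α - 1 - p) - 1) * (1 - t ^ (α - (α - 1 - p) - 1)) / (1 - t) ^ (1 + α) := by
  have hexp (p : ℝ) : α - p - 1 = α - 1 - p := by ring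
  constructor
  · have hden : 0 ≤ ((1 - t) ^ (1 + α))⁻¹ := inv_nonneg.2 (rpow_nonneg (by linarith) _)
    refine (((convexOn_rpow_sub_one_mul_one_sub_rpow_sub ht0 (α - 1)).smul hden).subset
      (subset_univ _) (convex_Ioo _ _)).congr fun p _ => ?_
    simp only [smul_eq_mul, hexp, div_eq_inv_mul]
  · intro p _
    rw [hexp, show α - (α - 1 - p) - 1 = p by ring]
    ring

theorem gamma_integrand_convex_symmetric (α : ℝ) (hα0 : 0 < α) (hα2 : α < 2)
    (t : ℝ) (ht0 : 0 < t) (ht1 : t < 1) :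
    ConvexOn ℝ (Set.Ioo (-1 : ℝ) α)
        (fun p : ℝ => (t ^ p - 1) * (1 - t ^ (α - p - 1)) / (1 - t) ^ (1 + α)) ∧
      ∀ p ∈ Set.Ioo (-1 : ℝ) α,
        (t ^ p - 1) * (1 - t ^ (α - p - 1)) / (1 - t) ^ (1 + α) =
          (t ^ (α - 1 - p) - 1) * (1 - t ^ (α - (α - 1 - p) - 1)) / (1 - t) ^ (1 + α) :=
  gamma_integrand_convex_symmetric_general α t ht0 ht1
end

section
/- Let 0 < α < 2. The function p ↦ γ(α,p) = ∫_0^1 (t^p − 1)(1 − t^{α−p−1}) / (1 − t)^{1+α} dt on (−1, α) attains its minimum at p = (α−1)/2; that is, γ(α,p) ≥ γ(α,(α−1)/2) for all p ∈ (−1, α). -/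
open MeasureTheory Real Set intervalIntegral

/-!
With `u = t ^ (p / 2)` and `v = t ^ ((α - 1 - p) / 2)`, the numerator of the integrand at `p` is
`(u² - 1)(1 - v²)` and at the midpoint it is `(uv - 1)(1 - uv)`; the two differ by `(u - v)²`, so
the integrands compare pointwise on `(0, 1)`. What remains is integrability: near `0` the
integrand is a combination of powers `t ^ e` with `e > -1`, near `1` its numerator is
`O((1 - t)²)` because `t ↦ t ^ q` is Lipschitz on `[1/2, 1]`.
-/

noncomputable def gammaIntegrand (α p t : ℝ) : ℝ :=
  (t ^ p - 1) * (1 - t ^ (α - p - 1)) / (1 - t) ^ (1 + α)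

lemma gammaIntegrand_midpoint_le (α p : ℝ) {t : ℝ} (ht0 : 0 < t) (ht1 : t ≤ 1) :
    gammaIntegrand α ((α - 1) / 2) t ≤ gammaIntegrand α p t := by
  set u := t ^ (p / 2)
  set v := t ^ ((α - 1 - p) / 2)
  have hu : t ^ p = u * u := by rw [← rpow_add ht0]; ring_nf
  have hv : t ^ (α - p - 1) = v * v := by rw [← rpow_add ht0]; ring_nf
  have huv : t ^ ((α - 1) / 2) = u * v := by rw [← rpow_add ht0]; ring_nf
  have huv' : t ^ (α - (α - 1) / 2 - 1) = u * v := by rw [← huv]; ring_nf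
  have hdiff : (u * u - 1) * (1 - v * v) - (u * v - 1) * (1 - u * v) = (u - v) ^ 2 := by ring
  unfold gammaIntegrand
  rw [hu, hv, huv, huv']
  exact div_le_div_of_nonneg_right (by linarith [sq_nonneg (u - v)])
    (rpow_nonneg (sub_nonneg.2 ht1) _)

lemma exists_lipschitzOnWith_rpow_const {a : ℝ} (ha : 0 < a) (b q : ℝ) :
    ∃ K, LipschitzOnWith K (fun t : ℝ => t ^ q) (Icc a b) :=
  ContDiffOn.exists_lipschitzOnWith
    (fun _ ht => (contDiffAt_rpow_const_of_ne (ha.trans_le ht.1).ne').contDiffWithinAt)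
    one_ne_zero (convex_Icc a b) isCompact_Icc

lemma abs_gammaIntegrand_le {α p A B t : ℝ} (hA : 0 ≤ A) (hB : 0 ≤ B) (ht : t ≤ 1)
    (hp : |t ^ p - 1| ≤ A * (1 - t)) (hq : |t ^ (α - p - 1) - 1| ≤ B * (1 - t)) :
    |gammaIntegrand α p t| ≤ A * B * (1 - t) ^ (1 - α) := by
  have h1t : 0 ≤ 1 - t := sub_nonneg.2 ht
  rw [gammaIntegrand, abs_div, abs_of_nonneg (rpow_nonneg h1t _)]
  refine div_le_of_le_mul₀ (rpow_nonneg h1t _) (by positivity) ?_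
  calc |(t ^ p - 1) * (1 - t ^ (α - p - 1))|
      = |t ^ p - 1| * |t ^ (α - p - 1) - 1| := by rw [abs_mul, abs_sub_comm 1]
    _ ≤ A * (1 - t) * (B * (1 - t)) := mul_le_mul hp hq (abs_nonneg _) (by positivity)
    _ = A * B * ((1 - t) ^ (1 - α) * (1 - t) ^ (1 + α)) := by
      rw [← rpow_add' h1t (by norm_num), show 1 - α + (1 + α) = (2 : ℕ) by push_cast; ring,
        rpow_natCast]
      ring
    _ = A * B * (1 - t) ^ (1 - α) * (1 - t) ^ (1 + α) := by ring

lemma intervalIntegrable_gammaIntegrand_zero_half {α p : ℝ} (hα0 : 0 < α) (hp1 : -1 < p)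
    (hpα : p < α) : IntervalIntegrable (gammaIntegrand α p) volume 0 (1 / 2) := by
  have hnum : IntervalIntegrable (fun t : ℝ => t ^ p + t ^ (α - p - 1) - t ^ (α - 1) - 1)
      volume 0 (1 / 2) :=
    (((intervalIntegrable_rpow' hp1).add (intervalIntegrable_rpow' (by linarith))).sub
      (intervalIntegrable_rpow' (by linarith))).sub intervalIntegrable_const
  have hden : ContinuousOn (fun t : ℝ => ((1 - t) ^ (1 + α))⁻¹) (uIcc 0 (1 / 2)) := by
    rw [uIcc_of_le (by norm_num)]
    intro t ht
    have h1t : 0 < 1 - t := by linarith [ht.2]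
    exact ((continuousAt_const.sub continuousAt_id).rpow_const (Or.inl h1t.ne')).inv₀
      (rpow_pos_of_pos h1t _).ne' |>.continuousWithinAt
  refine (hnum.mul_continuousOn hden).congr fun t ht => ?_
  rw [uIoc_of_le (by norm_num)] at ht
  have hprod : t ^ (α - 1) = t ^ p * t ^ (α - p - 1) := by rw [← rpow_add ht.1]; ring_nf
  simp only [gammaIntegrand, div_eq_mul_inv, hprod]
  ring

lemma intervalIntegrable_gammaIntegrand_half_one {α : ℝ} (p : ℝ) (hα2 : α < 2) :
    IntervalIntegrable (gammaIntegrand α p) volume (1 / 2) 1 := by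
  have ha : (0 : ℝ) < 1 / 2 := by norm_num
  obtain ⟨Kp, hKp⟩ := exists_lipschitzOnWith_rpow_const ha 1 p
  obtain ⟨Kq, hKq⟩ := exists_lipschitzOnWith_rpow_const ha 1 (α - p - 1)
  have hdom : IntervalIntegrable (fun t : ℝ => Kp * Kq * (1 - t) ^ (1 - α))
      volume (1 / 2) 1 := by
    have h := (intervalIntegrable_rpow' (r := 1 - α) (a := 1 / 2) (b := 0) (by linarith)
      |>.comp_sub_left 1).const_mul (Kp * Kq : ℝ)
    norm_num at h
    exact h
  refine hdom.mono_fun' (Measurable.aestronglyMeasurable (by unfold gammaIntegrand; fun_prop)) ?_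
  rw [uIoc_of_le (by norm_num)]
  filter_upwards [ae_restrict_mem measurableSet_Ioc] with t ht
  have htI : t ∈ Icc (1 / 2 : ℝ) 1 := ⟨ht.1.le, ht.2⟩
  have hdist : ∀ {q : ℝ} {K : NNReal},
      LipschitzOnWith K (fun t : ℝ => t ^ q) (Icc (1 / 2) 1) → |t ^ q - 1| ≤ K * (1 - t) :=
    fun hK => by
      simpa [Real.dist_eq, abs_of_nonpos (sub_nonpos.2 ht.2)] using
        hK.dist_le_mul t htI 1 (right_mem_Icc.2 (by norm_num))
  exact abs_gammaIntegrand_le Kp.2 Kq.2 ht.2 (hdist hKp) (hdist hKq)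

lemma integrableOn_gammaIntegrand {α p : ℝ} (hα0 : 0 < α) (hα2 : α < 2) (hp1 : -1 < p)
    (hpα : p < α) : IntegrableOn (gammaIntegrand α p) (Ioo 0 1) :=
  (intervalIntegrable_iff_integrableOn_Ioo_of_le zero_le_one).1 <|
    (intervalIntegrable_gammaIntegrand_zero_half hα0 hp1 hpα).trans
      (intervalIntegrable_gammaIntegrand_half_one p hα2)

theorem gamma_min_at_midpoint (α : ℝ) (hα0 : 0 < α) (hα2 : α < 2)
    (p : ℝ) (hp1 : -1 < p) (hpα : p < α) :
    (∫ t in Set.Ioo (0 : ℝ) 1,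
        (t ^ ((α - 1) / 2) - 1) * (1 - t ^ (α - (α - 1) / 2 - 1)) / (1 - t) ^ (1 + α)) ≤
      ∫ t in Set.Ioo (0 : ℝ) 1,
        (t ^ p - 1) * (1 - t ^ (α - p - 1)) / (1 - t) ^ (1 + α) :=
  setIntegral_mono_on (f := gammaIntegrand α ((α - 1) / 2)) (g := gammaIntegrand α p)
    (integrableOn_gammaIntegrand hα0 hα2 (by linarith) (by linarith))
    (integrableOn_gammaIntegrand hα0 hα2 hp1 hpα) measurableSet_Ioo
    fun _ ht => gammaIntegrand_midpoint_le α p ht.1 ht.2.le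
end

section
/- For every 0 < α < 2, γ(α,(α−1)/2) = −(1/α)·[B((1+α)/2, (2−α)/2)·2^{−α} − 1], where γ(α,p) = ∫_0^1 (t^p − 1)(1 − t^{α−p−1}) / (1 − t)^{1+α} dt and B is the Euler beta function. -/
open MeasureTheory Real Set

/-- The Euler beta function. -/
noncomputable def eulerBeta (a b : ℝ) : ℝ := Real.Gamma a * Real.Gamma b / Real.Gamma (a + b)

/-!
Write `p = (α - 1) / 2` and `q = p + 1 = (α + 1) / 2`. The function
`H t = (1 - t) ^ (-α) * ((1 - t ^ q) ^ 2 - (1 - t) * (t ^ q - t ^ α))`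
has derivative `α (1 - t ^ p) ^ 2 / (1 - t) ^ (1 + α) - (3 - α) / 2 * t ^ p * (1 - t) ^ (1 - α)`
on `(0, 1)`, with `H 0⁺ = 1` and `H 1⁻ = 0` (the bracket vanishes to second order at `t = 1`).
It comes from the ansatz `H = (1 - t) ^ (-α) * P` with `P` a combination of powers of `t`, which turns
the required derivative into `α P + (1 - t) P' = α (1 - t ^ p) ^ 2 - (3 - α) / 2 * t ^ p * (1 - t) ^ 2`.
Integrating over `(0, 1)` gives `α ∫ (1 - t ^ p) ^ 2 / (1 - t) ^ (1 + α) = (3 - α) / 2 * B(q, 2 - α) - 1`,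
and Legendre's duplication formula turns `(3 - α) / 2 * B(q, 2 - α)` into `B(q, (2 - α) / 2) 2 ^ (-α)`.
-/

open Filter Topology

theorem integral_Ioo_eq_sub_of_hasDerivAt_of_tendsto {E : Type*} [NormedAddCommGroup E]
    [NormedSpace ℝ E] [CompleteSpace E] {f f' : ℝ → E} {a b : ℝ} {fa fb : E} (hab : a < b)
    (hderiv : ∀ x ∈ Ioo a b, HasDerivAt f (f' x) x) (hint : IntegrableOn f' (Ioo a b))
    (ha : Tendsto f (𝓝[>] a) (𝓝 fa)) (hb : Tendsto f (𝓝[<] b) (𝓝 fb)) :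
    ∫ x in Ioo a b, f' x = fb - fa := by
  rw [← integral_Ioc_eq_integral_Ioo, ← intervalIntegral.integral_of_le hab.le]
  exact intervalIntegral.integral_eq_sub_of_hasDerivAt_of_tendsto hab hderiv
    ((intervalIntegrable_iff_integrableOn_Ioo_of_le hab.le).2 hint) ha hb

lemma tendsto_one_sub_rpow_div_one_sub (c : ℝ) :
    Tendsto (fun t : ℝ => (1 - t ^ c) / (1 - t)) (𝓝[<] 1) (𝓝 c) := by
  have hd : HasDerivAt (fun x : ℝ => x ^ c) c 1 := by
    simpa using Real.hasDerivAt_rpow_const (x := 1) (p := c) (Or.inl one_ne_zero)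
  refine ((hasDerivAt_iff_tendsto_slope.mp hd).mono_left
    (nhdsWithin_mono _ fun x hx => ne_of_lt hx)).congr' ?_
  filter_upwards [self_mem_nhdsWithin] with t (ht : t < 1)
  rw [slope_def_field, one_rpow, ← neg_div_neg_eq]
  ring_nf

lemma sq_one_sub_rpow_le {t r : ℝ} (ht0 : 0 < t) (ht1 : t ≤ 1) (hr : |r| ≤ 1) :
    (1 - t ^ r) ^ 2 ≤ (1 + t ^ (2 * r)) * (1 - t) ^ 2 := by
  rcases le_total 0 r with hr0 | hr0
  · have hle : t ≤ t ^ r := by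
      simpa using rpow_le_rpow_of_exponent_ge ht0 ht1 (abs_le.1 hr).2
    have hle1 : t ^ r ≤ 1 := rpow_le_one ht0.le ht1 hr0
    nlinarith [rpow_pos_of_pos ht0 (2 * r)]
  · have hle : t ≤ t ^ (-r) := by
      simpa using rpow_le_rpow_of_exponent_ge (y := 1) ht0 ht1 (by linarith [(abs_le.1 hr).1])
    have hinv : t ^ r * t ^ (-r) = 1 := by rw [← rpow_add ht0]; simp
    have hsq : t ^ (2 * r) = (t ^ r) ^ 2 := by rw [mul_comm, rpow_mul ht0.le]; norm_cast
    have hone : 1 ≤ t ^ r := one_le_rpow_of_pos_of_le_one_of_nonpos ht0 ht1 hr0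
    have hdiff : t ^ r - 1 ≤ t ^ r * (1 - t) := by
      nlinarith [mul_le_mul_of_nonneg_left hle (rpow_pos_of_pos ht0 r).le]
    rw [hsq]
    nlinarith [pow_le_pow_left₀ (sub_nonneg.2 hone) hdiff 2]

lemma integrableOn_rpow_mul_one_sub_rpow {a b : ℝ} (ha : 0 < a) (hb : 0 < b) :
    IntegrableOn (fun t : ℝ => t ^ (a - 1) * (1 - t) ^ (b - 1)) (Ioo 0 1) := by
  have h := (intervalIntegrable_iff_integrableOn_Ioo_of_le zero_le_one).mp
    (Complex.betaIntegral_convergent (u := a) (v := b) (by simpa) (by simpa))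
  refine IntegrableOn.congr_fun h.re (fun t ht => ?_) measurableSet_Ioo
  rw [RCLike.re_to_complex]
  norm_cast
  rw [← Complex.ofReal_cpow ht.1.le, ← Complex.ofReal_cpow (sub_nonneg.2 ht.2.le)]
  norm_cast

lemma integral_rpow_mul_one_sub_rpow {a b : ℝ} (ha : 0 < a) (hb : 0 < b) :
    ∫ t in Ioo (0 : ℝ) 1, t ^ (a - 1) * (1 - t) ^ (b - 1) = eulerBeta a b := by
  rw [show eulerBeta a b = ProbabilityTheory.beta a b from rfl,
    ProbabilityTheory.beta_eq_betaIntegralReal a b ha hb, Complex.betaIntegral,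
    intervalIntegral.integral_of_le zero_le_one, integral_Ioc_eq_integral_Ioo,
    ← RCLike.re_to_complex, ← integral_re]
  · refine setIntegral_congr_fun measurableSet_Ioo fun t ht => ?_
    norm_cast
    rw [← Complex.ofReal_cpow ht.1.le, ← Complex.ofReal_cpow (sub_nonneg.2 ht.2.le)]
    norm_cast
  · exact (intervalIntegrable_iff_integrableOn_Ioo_of_le zero_le_one).mp
      (Complex.betaIntegral_convergent (by simpa) (by simpa))

lemma eulerBeta_half_mul_two_rpow_neg {α : ℝ} (hα : α < 3) :
    eulerBeta ((1 + α) / 2) ((2 - α) / 2) * 2 ^ (-α)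
      = (3 - α) / 2 * eulerBeta ((1 + α) / 2) (2 - α) := by
  have hdup := Real.Gamma_mul_Gamma_add_half ((2 - α) / 2)
  rw [show (2 - α) / 2 + 1 / 2 = (3 - α) / 2 by ring, show 2 * ((2 - α) / 2) = 2 - α by ring,
    show 1 - (2 - α) = α - 1 by ring] at hdup
  have h32 : Gamma ((1 + α) / 2 + (2 - α) / 2) = √π / 2 := by
    rw [show (1 + α) / 2 + (2 - α) / 2 = 1 / 2 + 1 by ring, Gamma_add_one (by norm_num),
      Gamma_one_half_eq]
    ring
  have h52 : Gamma ((1 + α) / 2 + (2 - α)) = (3 - α) / 2 * Gamma ((3 - α) / 2) := by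
    rw [show (1 + α) / 2 + (2 - α) = (3 - α) / 2 + 1 by ring, Gamma_add_one (by linarith)]
  have h2 : (2 : ℝ) ^ (α - 1) * 2 ^ (-α) = 1 / 2 := by
    rw [← rpow_add two_pos, show α - 1 + -α = -1 by ring, rpow_neg_one, one_div]
  have hΓ : Gamma ((3 - α) / 2) ≠ 0 := (Gamma_pos_of_pos (by linarith)).ne'
  have hπ : √π ≠ 0 := (sqrt_pos.2 pi_pos).ne'
  have h3 : 3 - α ≠ 0 := by linarith
  rw [eulerBeta, eulerBeta, h32, h52]
  field_simp
  linear_combination (2 * Gamma ((1 + α) / 2)) * (2 : ℝ) ^ (-α) * hdup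
    + 2 * Gamma ((1 + α) / 2) * Gamma (2 - α) * √π * h2

noncomputable def midpointPrimitive (α t : ℝ) : ℝ :=
  (1 - t) ^ (-α) * ((1 - t ^ ((α + 1) / 2)) ^ 2 - (1 - t) * (t ^ ((α + 1) / 2) - t ^ α))

lemma hasDerivAt_midpointPrimitive (α : ℝ) {t : ℝ} (ht0 : 0 < t) (ht1 : t < 1) :
    HasDerivAt (midpointPrimitive α)
      (α * ((1 - t ^ ((α - 1) / 2)) ^ 2 / (1 - t) ^ (1 + α))
        - (3 - α) / 2 * (t ^ ((α + 1) / 2 - 1) * (1 - t) ^ (2 - α - 1))) t := by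
  have hs : 0 < 1 - t := sub_pos.2 ht1
  have hlin : HasDerivAt (fun t : ℝ => 1 - t) (-1) t := by
    simpa using (hasDerivAt_id t).const_sub 1
  have hq := Real.hasDerivAt_rpow_const (p := (α + 1) / 2) (Or.inl ht0.ne')
  have hα := Real.hasDerivAt_rpow_const (p := α) (Or.inl ht0.ne')
  have h := (hlin.rpow_const (p := -α) (Or.inl hs.ne')).mul
    (((hq.const_sub 1).pow 2).sub (hlin.mul (hq.sub hα)))
  refine h.congr_deriv ?_
  have ht_q : t ^ ((α + 1) / 2) = t * t ^ ((α - 1) / 2) := by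
    rw [show (α + 1) / 2 = 1 + (α - 1) / 2 by ring, rpow_add ht0, rpow_one]
  have ht_pred : t ^ (α - 1) = (t ^ ((α - 1) / 2)) ^ 2 := by
    rw [sq, ← rpow_add ht0]; ring_nf
  have ht_α : t ^ α = t * (t ^ ((α - 1) / 2)) ^ 2 := by
    rw [← ht_pred, mul_comm, ← rpow_add_one ht0.ne']; ring_nf
  have hs_pred : (1 - t) ^ (-α - 1) = ((1 - t) ^ α)⁻¹ / (1 - t) := by
    rw [rpow_sub hs, rpow_one, rpow_neg hs.le]
  have hs_succ : (1 - t) ^ (1 + α) = (1 - t) * (1 - t) ^ α := by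
    rw [rpow_add hs, rpow_one]
  have hs_one_sub : (1 - t) ^ (2 - α - 1) = (1 - t) / (1 - t) ^ α := by
    rw [show 2 - α - 1 = 1 - α by ring, rpow_sub hs, rpow_one]
  simp only [Pi.sub_apply, Pi.mul_apply, Pi.pow_apply]
  rw [show (α + 1) / 2 - 1 = (α - 1) / 2 by ring, ht_q, ht_α, ht_pred, hs_pred, hs_succ, hs_one_sub, rpow_neg hs.le]
  field_simp
  ring

lemma tendsto_midpointPrimitive_zero {α : ℝ} (hα : 0 < α) :
    Tendsto (midpointPrimitive α) (𝓝[>] 0) (𝓝 1) := by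
  have hq : 0 < (α + 1) / 2 := by linarith
  have hcont : ContinuousAt (midpointPrimitive α) 0 := by
    unfold midpointPrimitive
    refine ((continuousAt_const.sub continuousAt_id).rpow_const (by simp)).mul
      (((continuousAt_const.sub (continuousAt_rpow_const _ _ (Or.inr hq.le))).pow 2).sub
        ((continuousAt_const.sub continuousAt_id).mul
          ((continuousAt_rpow_const _ _ (Or.inr hq.le)).sub
            (continuousAt_rpow_const _ _ (Or.inr hα.le)))))
  simpa [midpointPrimitive, zero_rpow hq.ne', zero_rpow hα.ne'] using
    hcont.tendsto.mono_left nhdsWithin_le_nhds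

lemma tendsto_midpointPrimitive_one {α : ℝ} (hα : α < 2) :
    Tendsto (midpointPrimitive α) (𝓝[<] 1) (𝓝 0) := by
  have hvanish : Tendsto (fun t : ℝ => (1 - t) ^ (2 - α)) (𝓝[<] 1) (𝓝 0) := by
    have hcont : ContinuousAt (fun t : ℝ => (1 - t) ^ (2 - α)) 1 :=
      (continuousAt_const.sub continuousAt_id).rpow_const (Or.inr (by linarith))
    simpa [zero_rpow (by linarith : 2 - α ≠ 0)] using hcont.tendsto.mono_left nhdsWithin_le_nhds
  have hq := tendsto_one_sub_rpow_div_one_sub ((α + 1) / 2)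
  have hlim := hvanish.mul ((hq.pow 2).sub ((tendsto_one_sub_rpow_div_one_sub α).sub hq))
  rw [zero_mul] at hlim
  refine hlim.congr' ?_
  filter_upwards [self_mem_nhdsWithin] with t (ht : t < 1)
  have hs : 0 < 1 - t := sub_pos.2 ht
  rw [midpointPrimitive, show 2 - α = -α + 2 by ring, rpow_add hs, rpow_two]
  field_simp
  ring

lemma integrableOn_sq_one_sub_rpow_div {α : ℝ} (hα0 : 0 < α) (hα2 : α < 2) :
    IntegrableOn (fun t : ℝ => (1 - t ^ ((α - 1) / 2)) ^ 2 / (1 - t) ^ (1 + α)) (Ioo 0 1) := by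
  have hbound := (integrableOn_rpow_mul_one_sub_rpow one_pos (by linarith : 0 < 2 - α)).add
    (integrableOn_rpow_mul_one_sub_rpow hα0 (by linarith : 0 < 2 - α))
  refine hbound.mono' ((by fun_prop : Measurable _).aestronglyMeasurable) ?_
  filter_upwards [ae_restrict_mem measurableSet_Ioo] with t ⟨ht0, ht1⟩
  have hs : 0 < 1 - t := sub_pos.2 ht1
  have hle := sq_one_sub_rpow_le (r := (α - 1) / 2) ht0 ht1.le
    (abs_le.2 ⟨by linarith, by linarith⟩)
  have hpow : (1 - t) ^ (2 - α - 1) * (1 - t) ^ (1 + α) = (1 - t) ^ 2 := by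
    rw [← rpow_add hs, show 2 - α - 1 + (1 + α) = ((2 : ℕ) : ℝ) by push_cast; ring, rpow_natCast]
  rw [norm_of_nonneg (by positivity), div_le_iff₀ (by positivity)]
  calc (1 - t ^ ((α - 1) / 2)) ^ 2 ≤ (1 + t ^ (α - 1)) * (1 - t) ^ 2 := by
        rwa [show 2 * ((α - 1) / 2) = α - 1 by ring] at hle
    _ = _ := by rw [Pi.add_apply, sub_self, rpow_zero, ← hpow]; ring

theorem gamma_at_midpoint (α : ℝ) (hα0 : 0 < α) (hα2 : α < 2) :
    (∫ t in Set.Ioo (0 : ℝ) 1,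
        (t ^ ((α - 1) / 2) - 1) * (1 - t ^ (α - (α - 1) / 2 - 1)) / (1 - t) ^ (1 + α)) =
      -(1 / α) * (eulerBeta ((1 + α) / 2) ((2 - α) / 2) * 2 ^ (-α) - 1) := by
  have hf := integrableOn_sq_one_sub_rpow_div hα0 hα2
  have hg := integrableOn_rpow_mul_one_sub_rpow (a := (α + 1) / 2) (b := 2 - α)
    (by linarith) (by linarith)
  have hftc := integral_Ioo_eq_sub_of_hasDerivAt_of_tendsto zero_lt_one
    (fun t ht => hasDerivAt_midpointPrimitive α ht.1 ht.2)
    ((hf.const_mul α).sub (hg.const_mul ((3 - α) / 2)))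
    (tendsto_midpointPrimitive_zero hα0) (tendsto_midpointPrimitive_one hα2)
  rw [integral_sub (hf.const_mul α) (hg.const_mul _), integral_const_mul, integral_const_mul,
    integral_rpow_mul_one_sub_rpow (by linarith) (by linarith)] at hftc
  rw [show α - (α - 1) / 2 - 1 = (α - 1) / 2 by ring, eulerBeta_half_mul_two_rpow_neg (by linarith),
    show (1 + α) / 2 = (α + 1) / 2 by ring]
  have hneg : ∫ t in Ioo (0 : ℝ) 1,
      (t ^ ((α - 1) / 2) - 1) * (1 - t ^ ((α - 1) / 2)) / (1 - t) ^ (1 + α)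
      = -∫ t in Ioo (0 : ℝ) 1, (1 - t ^ ((α - 1) / 2)) ^ 2 / (1 - t) ^ (1 + α) := by
    rw [← integral_neg]; congr with t; ring
  have hI : ∫ t in Ioo (0 : ℝ) 1, (1 - t ^ ((α - 1) / 2)) ^ 2 / (1 - t) ^ (1 + α)
      = ((3 - α) / 2 * eulerBeta ((α + 1) / 2) (2 - α) - 1) / α := by
    rw [eq_div_iff hα0.ne']; linarith
  rw [hneg, hI]
  ring
end

section
/- Let d ≥ 2, 0 < α < 2, n ≥ 1, and let L be the set {x ∈ ℝ^d : max_{1≤k≤d−1}|x_k| < n² − 1, 2/n ≤ x_d < 1/2}. There is a constant c depending only on d and α such that for every x ∈ L, ∫_{{y ∈ ℝ^d : 0 < y_d < 1/n}} |x − y|^{−d−α} dy ≤ c · x_d^{−α−1} / n. -/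
/-!
For `y` in the slab `0 < y_d < h` and `x_d ≥ 2h`, both `a := x_d / 2` and the distance `|x' - y'|`
of the first coordinates are at most `|x - y|`, so `|x - y|^β ≤ 2^(-β) (a + |x' - y'|)^β` for
`β = -d - α ≤ 0`. The bound no longer depends on `y_d`, so its integral over the slab is
`h` times an integral over `ℝ^(d-1)`, which the substitution `y' = x' + a w` turns into
`a^(β + d - 1) = a^(-α - 1)` times the finite constant `∫ (1 + |w|)^β dw`.
-/

open MeasureTheory Real Set Module

section HaarScaling

variable {E : Type*} [NormedAddCommGroup E] [NormedSpace ℝ E] [FiniteDimensional ℝ E]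
  [MeasurableSpace E] [BorelSpace E] (μ : Measure E) [μ.IsAddHaarMeasure]

theorem lintegral_add_norm_sub_rpow (x₀ : E) {a : ℝ} (ha : 0 < a) (β : ℝ) :
    ∫⁻ z, ENNReal.ofReal ((a + ‖z - x₀‖) ^ β) ∂μ =
      ENNReal.ofReal (a ^ (β + finrank ℝ E)) * ∫⁻ w, ENNReal.ofReal ((1 + ‖w‖) ^ β) ∂μ := by
  have h_rescale : ∀ z : E, ENNReal.ofReal ((a + ‖z‖) ^ β) =
      ENNReal.ofReal (a ^ β) * ENNReal.ofReal ((1 + ‖a⁻¹ • z‖) ^ β) := fun z => by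
    rw [← ENNReal.ofReal_mul (by positivity), ← mul_rpow ha.le (by positivity), mul_add,
      norm_smul, norm_inv, norm_of_nonneg ha.le, mul_inv_cancel_left₀ ha.ne', mul_one]
  have h_map : ∫⁻ z, ENNReal.ofReal ((1 + ‖a⁻¹ • z‖) ^ β) ∂μ =
      ENNReal.ofReal (a ^ finrank ℝ E) * ∫⁻ w, ENNReal.ofReal ((1 + ‖w‖) ^ β) ∂μ := by
    rw [← lintegral_map (f := fun w => ENNReal.ofReal ((1 + ‖w‖) ^ β)) (by fun_prop)
      (by fun_prop), Measure.map_addHaar_smul μ (inv_ne_zero ha.ne'), lintegral_smul_measure,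
      inv_pow, inv_inv, abs_of_pos (by positivity), smul_eq_mul]
  rw [lintegral_sub_right_eq_self (fun z => ENNReal.ofReal ((a + ‖z‖) ^ β)) x₀]
  simp_rw [h_rescale]
  rw [lintegral_const_mul' _ _ ENNReal.ofReal_ne_top, h_map, ← mul_assoc,
    ← ENNReal.ofReal_mul (by positivity), ← rpow_natCast, ← rpow_add ha]

end HaarScaling

theorem rpow_le_two_rpow_neg_mul_add_rpow {r a b β : ℝ} (ha : 0 < a) (hb : 0 ≤ b) (hβ : β ≤ 0)
    (har : a ≤ r) (hbr : b ≤ r) : r ^ β ≤ 2 ^ (-β) * (a + b) ^ β := by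
  calc r ^ β ≤ ((a + b) / 2) ^ β := rpow_le_rpow_of_nonpos (by positivity) (by linarith) hβ
    _ = 2 ^ (-β) * (a + b) ^ β := by
      rw [div_rpow (by positivity) zero_le_two, rpow_neg zero_le_two, div_eq_inv_mul]

theorem setLIntegral_last_mem_comp_init {m : ℕ} (s : Set ℝ) {g : (Fin m → ℝ) → ENNReal}
    (hg : Measurable g) :
    ∫⁻ y in {y : EuclideanSpace ℝ (Fin (m + 1)) | y (Fin.last m) ∈ s}, g (fun k => y k.castSucc) =
      volume s * ∫⁻ z, g z := by
  set e : EuclideanSpace ℝ (Fin (m + 1)) ≃ᵐ ℝ × (Fin m → ℝ) :=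
    (MeasurableEquiv.toLp 2 (Fin (m + 1) → ℝ)).symm.trans
      (MeasurableEquiv.piFinSuccAbove (fun _ => ℝ) (Fin.last m))
  have he : MeasurePreserving e :=
    (volume_preserving_piFinSuccAbove (fun _ => ℝ) (Fin.last m)).comp
      (EuclideanSpace.volume_preserving_symm_measurableEquiv_toLp (Fin (m + 1)))
  have h_pre : e.symm ⁻¹' {y | y (Fin.last m) ∈ s} = s ×ˢ univ := by
    ext p; simp [e]
  have h_init : ∀ p : ℝ × (Fin m → ℝ), (fun k => e.symm p k.castSucc) = p.2 := fun p => by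
    ext k; simp [e]
  rw [← (he.symm e).setLIntegral_comp_preimage_emb e.symm.measurableEmbedding, h_pre]
  simp only [h_init]
  rw [Measure.volume_eq_prod, ← Measure.prod_restrict, Measure.restrict_univ,
    lintegral_prod _ (by fun_prop)]
  exact (setLIntegral_const s (∫⁻ z, g z)).trans (mul_comm _ _)

theorem abs_sub_apply_le_norm_sub {ι : Type*} [Fintype ι] (x y : EuclideanSpace ℝ ι) (i : ι) :
    |x i - y i| ≤ ‖x - y‖ :=
  PiLp.norm_apply_le (x - y) i

theorem setLIntegral_slab_rpow_norm_sub_le {m : ℕ} {β h : ℝ} (hβ : β ≤ 0) (hh : 0 < h)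
    (x : EuclideanSpace ℝ (Fin (m + 1))) (hx : 2 * h ≤ x (Fin.last m)) :
    ∫⁻ y in {y : EuclideanSpace ℝ (Fin (m + 1)) | y (Fin.last m) ∈ Ioo 0 h},
        ENNReal.ofReal (‖x - y‖ ^ β) ≤
      ENNReal.ofReal (h * 2 ^ (-β) * (x (Fin.last m) / 2) ^ (β + m)) *
        ∫⁻ w : Fin m → ℝ, ENNReal.ofReal ((1 + ‖w‖) ^ β) := by
  set a := x (Fin.last m) / 2 with ha_def
  have h_le_a : h ≤ a := by rw [ha_def]; linarith
  have ha : 0 < a := hh.trans_le h_le_a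
  set x' : Fin m → ℝ := fun k => x k.castSucc
  calc _ ≤ ∫⁻ y in {y : EuclideanSpace ℝ (Fin (m + 1)) | y (Fin.last m) ∈ Ioo 0 h},
          ENNReal.ofReal (2 ^ (-β)) *
            ENNReal.ofReal ((a + ‖(fun k => y k.castSucc) - x'‖) ^ β) := by
        refine setLIntegral_mono (by fun_prop) fun y ⟨_, hyh⟩ => ?_
        rw [← ENNReal.ofReal_mul (by positivity)]
        refine ENNReal.ofReal_le_ofReal
          (rpow_le_two_rpow_neg_mul_add_rpow ha (norm_nonneg _) hβ ?_ ?_)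
        · have := abs_sub_apply_le_norm_sub x y (Fin.last m)
          rw [abs_of_pos (by linarith)] at this
          linarith
        · refine pi_norm_le_iff_of_nonneg (norm_nonneg _) |>.2 fun k => ?_
          rw [Pi.sub_apply, norm_sub_rev]
          exact abs_sub_apply_le_norm_sub x y k.castSucc
    _ = ENNReal.ofReal (2 ^ (-β)) *
          (volume (Ioo 0 h) * ∫⁻ z, ENNReal.ofReal ((a + ‖z - x'‖) ^ β)) := by
        rw [lintegral_const_mul' _ _ ENNReal.ofReal_ne_top, setLIntegral_last_mem_comp_init _
          (g := fun z => ENNReal.ofReal ((a + ‖z - x'‖) ^ β)) (by fun_prop)]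
    _ = _ := by
        rw [volume_Ioo, sub_zero, lintegral_add_norm_sub_rpow _ _ ha, finrank_fin_fun, ← mul_assoc,
          ← mul_assoc, ← ENNReal.ofReal_mul (by positivity), ← ENNReal.ofReal_mul (by positivity),
          mul_comm (2 ^ (-β)) h]

theorem slab_integral_bound_general (d : ℕ) (α : ℝ) (hα0 : 0 < α) :
    ∃ c : ℝ, ∀ n : ℕ, 1 ≤ n → ∀ x : EuclideanSpace ℝ (Fin (d + 2)),
      (∀ k : Fin (d + 1), |x k.castSucc| < (n : ℝ) ^ 2 - 1) →
      2 / (n : ℝ) ≤ x (Fin.last (d + 1)) → x (Fin.last (d + 1)) < 1 / 2 →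
      (∫ y in {y : EuclideanSpace ℝ (Fin (d + 2)) |
            0 < y (Fin.last (d + 1)) ∧ y (Fin.last (d + 1)) < 1 / (n : ℝ)},
          ‖x - y‖ ^ (-((d : ℝ) + 2) - α)) ≤
        c * x (Fin.last (d + 1)) ^ (-α - 1) / n := by
  have hβ : -((d : ℝ) + 2) - α ≤ 0 := by linarith [d.cast_nonneg (α := ℝ)]
  have hK : ∫⁻ w : Fin (d + 1) → ℝ, ENNReal.ofReal ((1 + ‖w‖) ^ (-((d : ℝ) + 2) - α)) ≠ ⊤ := by
    rw [← neg_add']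
    exact (finite_integral_one_add_norm (by simp; linarith)).ne
  refine ⟨2 ^ (-(-((d : ℝ) + 2) - α)) * 2 ^ (α + 1) *
    (∫⁻ w : Fin (d + 1) → ℝ, ENNReal.ofReal ((1 + ‖w‖) ^ (-((d : ℝ) + 2) - α))).toReal,
    fun n hn x _ hx _ => ?_⟩
  have hn0 : (0 : ℝ) < n := by exact_mod_cast hn
  have hxL : 2 * (1 / (n : ℝ)) ≤ x (Fin.last (d + 1)) := by rwa [mul_one_div]
  have hxL0 : 0 ≤ x (Fin.last (d + 1)) := le_trans (by positivity) hx
  rw [integral_eq_lintegral_of_nonneg_ae (.of_forall fun y => by positivity)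
    (by fun_prop : Measurable fun y => ‖x - y‖ ^ (-((d : ℝ) + 2) - α)).aestronglyMeasurable]
  refine (ENNReal.toReal_mono (ENNReal.mul_ne_top ENNReal.ofReal_ne_top hK)
    (setLIntegral_slab_rpow_norm_sub_le hβ (by positivity) x hxL)).trans_eq ?_
  have hexp : -((d : ℝ) + 2) - α + ((d + 1 : ℕ) : ℝ) = -(α + 1) := by push_cast; ring
  rw [ENNReal.toReal_mul, ENNReal.toReal_ofReal (by positivity), hexp,
    div_rpow hxL0 zero_le_two, rpow_neg zero_le_two (α + 1), div_inv_eq_mul, neg_add' α 1]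
  ring

theorem slab_integral_bound (d : ℕ) (α : ℝ) (hα0 : 0 < α) (hα2 : α < 2) :
    ∃ c : ℝ, ∀ n : ℕ, 1 ≤ n → ∀ x : EuclideanSpace ℝ (Fin (d + 2)),
      (∀ k : Fin (d + 1), |x k.castSucc| < (n : ℝ) ^ 2 - 1) →
      2 / (n : ℝ) ≤ x (Fin.last (d + 1)) → x (Fin.last (d + 1)) < 1 / 2 →
      (∫ y in {y : EuclideanSpace ℝ (Fin (d + 2)) |
            0 < y (Fin.last (d + 1)) ∧ y (Fin.last (d + 1)) < 1 / (n : ℝ)},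
          ‖x - y‖ ^ (-((d : ℝ) + 2) - α)) ≤
        c * x (Fin.last (d + 1)) ^ (-α - 1) / n :=
  slab_integral_bound_general d α hα0
end
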